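/- Let d be an odd positive integer, and fix (α₁,β₁),…,(αᵢ,βᵢ) ∈ ZMod d × ZMod d with 1 ≤ i ≤ d, and a fiducial unit vector f ∈ ℂ^(ZMod d), such that the coherent states c(α₁,β₁),…,c(αᵢ,βᵢ) are linearly independent. Then the following resolution of the identity holds: (1/(i·d)) · Σ_{κ,λ ∈ ZMod d} Π(H(α₁+κ, β₁+λ) ⊔ ⋯ ⊔ H(αᵢ+κ, βᵢ+λ)) = 1, where 1 is the identity operator on ℂ^(ZMod d). -/

import Mathlib

open scoped BigOperators

variable {d : ℕ} [NeZero d]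

/-- `ω(m) = exp(2πi m/d)` for `m ∈ ℤ/d`. -/
noncomputable def omegaZ (d : ℕ) [NeZero d] (m : ZMod d) : ℂ :=
  Complex.exp (2 * Real.pi * Complex.I * (m.val : ℂ) / (d : ℂ))

/-- The displacement operator `D(α,β)`, determined by
`D(α,β) e_n = ω(α(n+β) − 2⁻¹αβ) e_{n+β}`, i.e.
`(D(α,β) f) m = ω(α m − 2⁻¹ α β) · f (m − β)`. -/
noncomputable def disp (α β : ZMod d) :
    EuclideanSpace ℂ (ZMod d) →ₗ[ℂ] EuclideanSpace ℂ (ZMod d) where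
  toFun f := WithLp.toLp 2 (fun m => omegaZ d (α * m - (2 : ZMod d)⁻¹ * α * β) * f (m - β))
  map_add' f g := by
    ext m
    simp [mul_add]
  map_smul' c f := by
    ext m
    simp only [PiLp.smul_apply, smul_eq_mul, RingHom.id_apply, PiLp.toLp_apply]
    ring

/-- The coherent state `c(α,β) = D(α,β) f` for a fiducial vector `f`. -/
noncomputable def cohState (f : EuclideanSpace ℂ (ZMod d)) (α β : ZMod d) :
    EuclideanSpace ℂ (ZMod d) :=
  disp α β f

/-- The one-dimensional subspace `H(α,β) = ℂ·c(α,β)`. -/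
noncomputable def cohSubspace (f : EuclideanSpace ℂ (ZMod d)) (α β : ZMod d) :
    Submodule ℂ (EuclideanSpace ℂ (ZMod d)) :=
  Submodule.span ℂ {cohState f α β}

/-- Orthogonal projection onto a subspace, as an operator. -/
noncomputable def projCoh (K : Submodule ℂ (EuclideanSpace ℂ (ZMod d))) :
    EuclideanSpace ℂ (ZMod d) →L[ℂ] EuclideanSpace ℂ (ZMod d) :=
  K.subtypeL.comp (K.orthogonalProjection)


/-!
Translating every coherent state by `(κ, λ)` is, up to phases, the unitary `D(κ, λ)`, so the
shifted span is `D(κ, λ) K` for `K = H(α₁, β₁) ⊔ ⋯ ⊔ H(αᵢ, βᵢ)` and its projection is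
`D Π(K) D⁻¹`. Averaging `D A D⁻¹` over all displacements turns any operator `A` into
`tr A / d`: in matrix entries, the character sum over `κ` kills the off-diagonal entries and the
sum over `λ` runs through the diagonal. Finally `tr Π(K) = dim K = i` by linear independence.
-/

local notation "𝓗" => EuclideanSpace ℂ (ZMod d)

lemma omegaZ_eq_stdAddChar (m : ZMod d) : omegaZ d m = ZMod.stdAddChar m := by
  rw [ZMod.stdAddChar_apply, ZMod.toCircle_apply, omegaZ]

lemma omegaZ_add (a b : ZMod d) : omegaZ d (a + b) = omegaZ d a * omegaZ d b := by
  simp only [omegaZ_eq_stdAddChar, AddChar.map_add_eq_mul]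

lemma omegaZ_zero : omegaZ d 0 = 1 := by
  rw [omegaZ_eq_stdAddChar, AddChar.map_zero_eq_one]

lemma norm_omegaZ (m : ZMod d) : ‖omegaZ d m‖ = 1 := by
  rw [omegaZ_eq_stdAddChar, ZMod.stdAddChar_apply, Circle.norm_coe]

lemma sum_omegaZ_mul (t : ZMod d) :
    ∑ κ : ZMod d, omegaZ d (κ * t) = if t = 0 then (d : ℂ) else 0 := by
  simp only [omegaZ_eq_stdAddChar, AddChar.sum_mulShift t (ZMod.isPrimitive_stdAddChar d),
    ZMod.card, Nat.cast_ite, Nat.cast_zero]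

lemma ZMod.mul_inv_two_of_odd {n : ℕ} (hn : Odd n) : 2 * (2 : ZMod n)⁻¹ = 1 := by
  have : IsUnit (2 : ZMod n) := by
    exact_mod_cast (ZMod.isUnit_iff_coprime 2 n).2 (Nat.coprime_two_left.2 hn)
  exact ZMod.mul_inv_of_unit _ this

lemma disp_apply (α β : ZMod d) (g : 𝓗) (m : ZMod d) :
    disp α β g m = omegaZ d (α * m - (2 : ZMod d)⁻¹ * α * β) * g (m - β) := rfl

lemma disp_disp (hd : Odd d) (κ lam α β : ZMod d) (g : 𝓗) :
    disp κ lam (disp α β g)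
      = omegaZ d ((2 : ZMod d)⁻¹ * (κ * β - α * lam)) • disp (α + κ) (β + lam) g := by
  ext m
  simp only [disp_apply, PiLp.smul_apply, smul_eq_mul, ← mul_assoc, ← omegaZ_add]
  rw [sub_sub, add_comm lam β]
  congr 2
  linear_combination (α * lam) * ZMod.mul_inv_two_of_odd hd

lemma disp_zero_zero (g : 𝓗) : disp 0 0 g = g := by
  ext m
  simp [disp_apply, omegaZ_zero]

lemma disp_neg_disp (hd : Odd d) (α β : ZMod d) (g : 𝓗) :
    disp (-α) (-β) (disp α β g) = g := by
  rw [disp_disp hd, add_neg_cancel, add_neg_cancel, disp_zero_zero,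
    show (2 : ZMod d)⁻¹ * (-α * β - α * -β) = 0 by ring, omegaZ_zero, one_smul]

lemma norm_disp (α β : ZMod d) (g : 𝓗) : ‖disp α β g‖ = ‖g‖ := by
  simp only [EuclideanSpace.norm_eq, disp_apply, norm_mul, norm_omegaZ, one_mul]
  congr 1
  exact Fintype.sum_equiv (Equiv.subRight β) _ _ fun _ => rfl

noncomputable def dispEquiv (hd : Odd d) (α β : ZMod d) : 𝓗 ≃ₗᵢ[ℂ] 𝓗 where
  toLinearEquiv := LinearEquiv.ofLinearMap (disp α β) (disp (-α) (-β))
    (LinearMap.ext fun g => by simpa using disp_neg_disp hd (-α) (-β) g)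
    (LinearMap.ext (disp_neg_disp hd α β))
  norm_map' := norm_disp α β

lemma dispEquiv_apply (hd : Odd d) (α β : ZMod d) (g : 𝓗) :
    dispEquiv hd α β g = disp α β g := rfl

lemma dispEquiv_symm_apply (hd : Odd d) (α β : ZMod d) (g : 𝓗) :
    (dispEquiv hd α β).symm g = disp (-α) (-β) g := rfl

lemma disp_single (α β n : ZMod d) :
    disp α β (EuclideanSpace.single n 1)
      = omegaZ d (α * (n + β) - (2 : ZMod d)⁻¹ * α * β) •
          EuclideanSpace.single (n + β) 1 := by
  ext m
  by_cases h : m = n + β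
  · simp [disp_apply, h]
  · simp [disp_apply, h, sub_eq_iff_eq_add]

lemma dispEquiv_conj_single_apply (hd : Odd d) (A : 𝓗 →ₗ[ℂ] 𝓗) (κ lam n m : ZMod d) :
    dispEquiv hd κ lam (A ((dispEquiv hd κ lam).symm (EuclideanSpace.single n 1))) m
      = omegaZ d (κ * (m - n)) * A (EuclideanSpace.single (n - lam) 1) (m - lam) := by
  rw [dispEquiv_symm_apply, disp_single, map_smul, dispEquiv_apply, map_smul, PiLp.smul_apply,
    smul_eq_mul, disp_apply, ← mul_assoc, ← omegaZ_add, ← sub_eq_add_neg]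
  congr 2
  linear_combination (-(κ * lam)) * ZMod.mul_inv_two_of_odd hd

lemma trace_eq_sum_single (A : 𝓗 →ₗ[ℂ] 𝓗) :
    LinearMap.trace ℂ _ A = ∑ p, A (EuclideanSpace.single p 1) p := by
  rw [LinearMap.trace_eq_matrix_trace ℂ (EuclideanSpace.basisFun (ZMod d) ℂ).toBasis,
    Matrix.trace]
  simp [LinearMap.toMatrix_apply]

theorem sum_dispEquiv_conj_apply (hd : Odd d) (A : 𝓗 →L[ℂ] 𝓗) (x : 𝓗) :
    ∑ κ : ZMod d, ∑ lam : ZMod d, dispEquiv hd κ lam (A ((dispEquiv hd κ lam).symm x))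
      = ((d : ℂ) * LinearMap.trace ℂ _ A.toLinearMap) • x := by
  suffices h : ∑ κ : ZMod d, ∑ lam : ZMod d,
      (dispEquiv hd κ lam).toLinearEquiv.toLinearMap ∘ₗ A.toLinearMap ∘ₗ
        (dispEquiv hd κ lam).symm.toLinearEquiv.toLinearMap
      = ((d : ℂ) * LinearMap.trace ℂ _ A.toLinearMap) • LinearMap.id by
    simpa using LinearMap.congr_fun h x
  refine (EuclideanSpace.basisFun (ZMod d) ℂ).toBasis.ext fun n => ?_
  ext m
  simp only [OrthonormalBasis.coe_toBasis, EuclideanSpace.basisFun_apply, LinearMap.sum_apply,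
    Finset.sum_apply, LinearMap.comp_apply, WithLp.ofLp_sum, LinearEquiv.coe_coe,
    LinearIsometryEquiv.coe_toLinearEquiv, dispEquiv_conj_single_apply, LinearMap.smul_apply,
    LinearMap.id_apply, PiLp.smul_apply, smul_eq_mul]
  rw [Finset.sum_comm]
  simp only [← Finset.sum_mul, sum_omegaZ_mul, sub_eq_zero, PiLp.single_apply]
  split_ifs with h
  · rw [h, ← Finset.mul_sum, trace_eq_sum_single, mul_one]
    exact congrArg _ (Fintype.sum_equiv (Equiv.subLeft n) _ _ fun _ => rfl)
  · simp

lemma projCoh_map (U : 𝓗 ≃ₗᵢ[ℂ] 𝓗) (K : Submodule ℂ 𝓗) (x : 𝓗) :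
    projCoh (K.map U.toLinearEquiv.toLinearMap) x = U (projCoh K (U.symm x)) :=
  Submodule.starProjection_map_apply U K x

lemma trace_projCoh (K : Submodule ℂ 𝓗) :
    LinearMap.trace ℂ _ (projCoh K).toLinearMap = Module.finrank ℂ K :=
  LinearMap.IsProj.trace ⟨fun x => (K.orthogonalProjectionOnto x).2,
    fun _ => Submodule.starProjection_eq_self_iff.mpr⟩

lemma map_cohSubspace (hd : Odd d) (f : 𝓗) (κ lam α β : ZMod d) :
    (cohSubspace f α β).map (dispEquiv hd κ lam).toLinearEquiv.toLinearMap
      = cohSubspace f (α + κ) (β + lam) := by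
  rw [cohSubspace, Submodule.map_span, Set.image_singleton, cohSubspace, LinearEquiv.coe_coe,
    LinearIsometryEquiv.coe_toLinearEquiv, dispEquiv_apply, cohState, disp_disp hd]
  exact Submodule.span_singleton_smul_eq (IsUnit.mk0 _ (Complex.exp_ne_zero _)) _

theorem coherent_resolution_of_identity_general
    (hd : Odd d)
    (i : ℕ) (hi1 : 1 ≤ i)
    (αβ : Fin i → ZMod d × ZMod d)
    (f : EuclideanSpace ℂ (ZMod d))
    (hli : LinearIndependent ℂ fun j : Fin i => cohState f (αβ j).1 (αβ j).2) :
    (((i : ℂ) * (d : ℂ))⁻¹) •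
      ∑ κ : ZMod d, ∑ lam : ZMod d,
        projCoh (⨆ j : Fin i, cohSubspace f ((αβ j).1 + κ) ((αβ j).2 + lam)) =
      (1 : EuclideanSpace ℂ (ZMod d) →L[ℂ] EuclideanSpace ℂ (ZMod d)) := by
  set K := ⨆ j : Fin i, cohSubspace f (αβ j).1 (αβ j).2
  have hK : Module.finrank ℂ K = i := by
    have h := finrank_span_eq_card hli
    rw [Fintype.card_fin, Submodule.span_range_eq_iSup] at h
    exact h
  have hshift (κ lam : ZMod d) :
      (⨆ j : Fin i, cohSubspace f ((αβ j).1 + κ) ((αβ j).2 + lam))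
        = K.map (dispEquiv hd κ lam).toLinearEquiv.toLinearMap := by
    simp only [K, Submodule.map_iSup, map_cohSubspace]
  have hi : (i : ℂ) ≠ 0 := Nat.cast_ne_zero.2 (by omega)
  ext1 x
  simp only [smul_apply, sum_apply, hshift, projCoh_map, one_apply_eq_self]
  rw [sum_dispEquiv_conj_apply, trace_projCoh, hK, smul_smul, mul_comm (d : ℂ),
    inv_mul_cancel₀ (mul_ne_zero hi (NeZero.ne _)), one_smul]

theorem coherent_resolution_of_identity
    (hd : Odd d) (hpos : 0 < d)
    (i : ℕ) (hi1 : 1 ≤ i) (hid : i ≤ d)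
    (αβ : Fin i → ZMod d × ZMod d)
    (f : EuclideanSpace ℂ (ZMod d)) (hf : ‖f‖ = 1)
    (hli : LinearIndependent ℂ fun j : Fin i => cohState f (αβ j).1 (αβ j).2) :
    (((i : ℂ) * (d : ℂ))⁻¹) •
      ∑ κ : ZMod d, ∑ lam : ZMod d,
        projCoh (⨆ j : Fin i, cohSubspace f ((αβ j).1 + κ) ((αβ j).2 + lam)) =
      (1 : EuclideanSpace ℂ (ZMod d) →L[ℂ] EuclideanSpace ℂ (ZMod d)) :=
  coherent_resolution_of_identity_general hd i hi1 αβ f hli
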